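/- Let r₁ < r₂ < r₃ be real numbers, set s₁ = r₁ + r₂ + r₃, s₂ = r₁r₂ + r₁r₃ + r₂r₃, s₃ = r₁r₂r₃, and let m = √((r₂ − r₁)/(r₃ − r₁)) ∈ (0,1). Then s₃ = −(1/27)·((s₁² − 3s₂)/(m⁴ − m² + 1))^{3/2}·(−2m⁶ + 3m⁴ + 3m² − 2) + s₁s₂/3 − 2s₁³/27. -/

import Mathlib

/-! The quantities `s₁² − 3s₂` and `s₃ − s₁s₂/3 + 2s₁³/27` (minus the product of the roots
centred at `s₁/3`) are invariant under translation of the roots and homogeneous of degrees 2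
and 3. Writing `r₂ − r₁ = m²(r₃ − r₁)`, they are therefore `(r₃ − r₁)²` and `(r₃ − r₁)³` times
their values at the roots `0, m², 1`, namely `m⁴ − m² + 1` and `(1/27)(−2m⁶ + 3m⁴ + 3m² − 2)`.
The first identity lets one solve for `r₃ − r₁`, the second then gives `s₃`. -/

lemma sq_sum_sub_three_mul_sum_mul_of_sub_eq_mul {r1 r2 r3 μ : ℝ}
    (hμ : r2 - r1 = μ * (r3 - r1)) :
    (r1 + r2 + r3) ^ 2 - 3 * (r1 * r2 + r1 * r3 + r2 * r3) = (r3 - r1) ^ 2 * (μ ^ 2 - μ + 1) := by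
  linear_combination (r2 - r1 + μ * (r3 - r1) - (r3 - r1)) * hμ

lemma prod_eq_of_sub_eq_mul {r1 r2 r3 μ : ℝ} (hμ : r2 - r1 = μ * (r3 - r1)) :
    r1 * r2 * r3 =
      -(1 / 27) * (r3 - r1) ^ 3 * (-2 * μ ^ 3 + 3 * μ ^ 2 + 3 * μ - 2) +
        (r1 + r2 + r3) * (r1 * r2 + r1 * r3 + r2 * r3) / 3 - 2 * (r1 + r2 + r3) ^ 3 / 27 := by
  obtain rfl : r2 = r1 + μ * (r3 - r1) := by linarith
  ring

lemma sq_sub_add_one_pos (μ : ℝ) : 0 < μ ^ 2 - μ + 1 := by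
  nlinarith [sq_nonneg (μ - 1 / 2)]

lemma Real.sq_rpow_three_halves {x : ℝ} (hx : 0 ≤ x) : (x ^ 2) ^ ((3 : ℝ) / 2) = x ^ 3 := by
  rw [← Real.rpow_natCast_mul hx]
  norm_num

theorem stmt_15 (r1 r2 r3 s1 s2 s3 m : ℝ)
    (h12 : r1 < r2) (h23 : r2 < r3)
    (hs1 : s1 = r1 + r2 + r3) (hs2 : s2 = r1 * r2 + r1 * r3 + r2 * r3)
    (hs3 : s3 = r1 * r2 * r3)
    (hm : m = Real.sqrt ((r2 - r1) / (r3 - r1))) :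
    s3 = -(1 / 27) * ((s1 ^ 2 - 3 * s2) / (m ^ 4 - m ^ 2 + 1)) ^ ((3 : ℝ) / 2) *
        (-2 * m ^ 6 + 3 * m ^ 4 + 3 * m ^ 2 - 2) +
      s1 * s2 / 3 - 2 * s1 ^ 3 / 27 := by
  have hd : 0 < r3 - r1 := by linarith
  have hμ : r2 - r1 = m ^ 2 * (r3 - r1) := by
    rw [hm, Real.sq_sqrt (div_nonneg (sub_nonneg.2 h12.le) hd.le), div_mul_cancel₀ _ hd.ne']
  rw [show m ^ 4 - m ^ 2 + 1 = (m ^ 2) ^ 2 - m ^ 2 + 1 by ring,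
    show -2 * m ^ 6 + 3 * m ^ 4 + 3 * m ^ 2 - 2 =
      -2 * (m ^ 2) ^ 3 + 3 * (m ^ 2) ^ 2 + 3 * m ^ 2 - 2 by ring]
  generalize m ^ 2 = μ at hμ ⊢
  have hspread : (s1 ^ 2 - 3 * s2) / (μ ^ 2 - μ + 1) = (r3 - r1) ^ 2 := by
    rw [hs1, hs2, sq_sum_sub_three_mul_sum_mul_of_sub_eq_mul hμ,
      mul_div_cancel_right₀ _ (sq_sub_add_one_pos μ).ne']
  rw [hspread, Real.sq_rpow_three_halves hd.le, hs1, hs2, hs3]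
  exact prod_eq_of_sub_eq_mul hμ
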